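/- arXiv:2005.04776 — 3 statements merged into one kernel-verified Lean document; each statement's English description precedes it below -/
import Mathlib

section
/- Let T_0 = {(γ, υ) ∈ Iw⁺_{GL_g} × M_g(pℤ_p) : ᵀγ Ĵ_g υ = ᵀυ Ĵ_g γ}. Then the map (γ, υ) ↦ the 2g×2g block matrix ((γ, 0), (υ, Ĵ_g ᵀγ⁻¹ Ĵ_g)) sends T_0 into GSp_{2g}(ℤ_p), and the image matrix has similitude factor 1. -/
/-! Since `Ĵ_g` is a symmetric involution, the lower-right block `Ĵ_g ᵀγ⁻¹ Ĵ_g` makes the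
off-diagonal blocks of the Gram matrix `ᵀM J M` equal to those of `J`, while its upper-left block
`ᵀυ Ĵ_g γ - ᵀγ Ĵ_g υ` vanishes by the defining relation of `T_0`. -/

open Matrix

/-- The `g × g` anti-diagonal matrix of ones `Ĵ_g`. -/
def antiDiagOne (g : ℕ) (R : Type*) [CommRing R] : Matrix (Fin g) (Fin g) R :=
  Matrix.of fun i j => if (i : ℕ) + (j : ℕ) + 1 = g then 1 else 0

/-- The standard symplectic matrix `J = ((0, -Ĵ_g), (Ĵ_g, 0))`. -/
def Jmat (g : ℕ) (R : Type*) [CommRing R] :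
    Matrix (Fin g ⊕ Fin g) (Fin g ⊕ Fin g) R :=
  Matrix.fromBlocks 0 (-(antiDiagOne g R)) (antiDiagOne g R) 0

/-- Membership in the strict Iwahori subgroup `Iw⁺_{GL_g}` of `GL_g(ℤ_p)`:
invertible matrices congruent to a diagonal matrix mod `p`. -/
def MemIwPlusGL (p g : ℕ) [Fact p.Prime] (γ : Matrix (Fin g) (Fin g) (PadicInt p)) : Prop :=
  IsUnit γ.det ∧ ∀ i j : Fin g, i ≠ j → (p : PadicInt p) ∣ γ i j

/-- Membership in `T_0`: pairs `(γ, υ)` with `γ ∈ Iw⁺_{GL_g}`,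
`υ ∈ M_g(pℤ_p)` and `ᵀγ Ĵ_g υ = ᵀυ Ĵ_g γ`. -/
def MemT0 (p g : ℕ) [Fact p.Prime] (γ υ : Matrix (Fin g) (Fin g) (PadicInt p)) : Prop :=
  MemIwPlusGL p g γ ∧ (∀ i j : Fin g, (p : PadicInt p) ∣ υ i j) ∧
    γᵀ * antiDiagOne g (PadicInt p) * υ = υᵀ * antiDiagOne g (PadicInt p) * γ

section AntiDiagOne

variable (g : ℕ) (R : Type*) [CommRing R]

lemma antiDiagOne_transpose : (antiDiagOne g R)ᵀ = antiDiagOne g R := by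
  ext i j
  simp only [antiDiagOne, transpose_apply, of_apply, add_comm (j : ℕ)]

lemma antiDiagOne_apply_eq_ite_rev (i j : Fin g) :
    antiDiagOne g R i j = if j = i.rev then 1 else 0 := by
  simp only [antiDiagOne, of_apply, Fin.ext_iff, Fin.val_rev]
  congr 1
  simp only [eq_iff_iff]
  omega

lemma antiDiagOne_mul_self : antiDiagOne g R * antiDiagOne g R = 1 := by
  ext i j
  simp only [mul_apply, antiDiagOne_apply_eq_ite_rev, ite_mul, one_mul, zero_mul,
    Finset.sum_ite_eq', Finset.mem_univ, if_true, one_apply, Fin.rev_rev, eq_comm (a := j)]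

end AntiDiagOne

section BlockLowerTriangular

variable {n R : Type*} [Fintype n] [CommRing R]

lemma fromBlocks_transpose_mul_symplectic_mul {J : Matrix n n R} (A C D : Matrix n n R) :
    (fromBlocks A 0 C D)ᵀ * fromBlocks 0 (-J) J 0 * fromBlocks A 0 C D =
      fromBlocks (Cᵀ * J * A - Aᵀ * J * C) (-(Aᵀ * J * D)) (Dᵀ * J * A) 0 := by
  simp only [fromBlocks_transpose, fromBlocks_multiply, transpose_zero, Matrix.mul_zero,
    Matrix.zero_mul, Matrix.mul_neg, Matrix.neg_mul, add_zero, zero_add, Matrix.mul_assoc,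
    sub_eq_add_neg, neg_zero]

variable [DecidableEq n] {J γ : Matrix n n R}

lemma transpose_mul_mul_conj_inv_transpose (hJ : J * J = 1) (hγ : IsUnit γ.det) :
    γᵀ * J * (J * (γ⁻¹)ᵀ * J) = J := by
  rw [show γᵀ * J * (J * (γ⁻¹)ᵀ * J) = γᵀ * (J * J) * (γ⁻¹)ᵀ * J by noncomm_ring, hJ,
    Matrix.mul_one, ← transpose_mul, nonsing_inv_mul _ hγ, transpose_one, Matrix.one_mul]

lemma conj_inv_transpose_transpose_mul_mul (hJ : J * J = 1) (hJt : Jᵀ = J) (hγ : IsUnit γ.det) :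
    (J * (γ⁻¹)ᵀ * J)ᵀ * J * γ = J := by
  rw [transpose_mul, transpose_mul, hJt, transpose_transpose,
    show J * (γ⁻¹ * J) * J * γ = J * γ⁻¹ * (J * J) * γ by noncomm_ring, hJ, Matrix.mul_one,
    Matrix.mul_assoc, nonsing_inv_mul _ hγ, Matrix.mul_one]

lemma isUnit_det_fromBlocks_conj_inv_transpose (hJ : J * J = 1) (hγ : IsUnit γ.det)
    (υ : Matrix n n R) : IsUnit (fromBlocks γ 0 υ (J * (γ⁻¹)ᵀ * J)).det := by
  have hJdet : IsUnit J.det := .of_mul_eq_one _ (by rw [← det_mul, hJ, det_one])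
  rw [det_fromBlocks_zero₁₂, det_mul, det_mul, det_transpose]
  exact hγ.mul ((hJdet.mul (isUnit_nonsing_inv_det γ hγ)).mul hJdet)

lemma fromBlocks_conj_inv_transpose_symplectic (hJ : J * J = 1) (hJt : Jᵀ = J)
    (hγ : IsUnit γ.det) {υ : Matrix n n R} (hυ : γᵀ * J * υ = υᵀ * J * γ) :
    (fromBlocks γ 0 υ (J * (γ⁻¹)ᵀ * J))ᵀ * fromBlocks 0 (-J) J 0 *
      fromBlocks γ 0 υ (J * (γ⁻¹)ᵀ * J) = fromBlocks 0 (-J) J 0 := by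
  rw [fromBlocks_transpose_mul_symplectic_mul, hυ, sub_self,
    transpose_mul_mul_conj_inv_transpose hJ hγ, conj_inv_transpose_transpose_mul_mul hJ hJt hγ]

end BlockLowerTriangular

/-- The map `(γ, υ) ↦ ((γ, 0), (υ, Ĵ_g ᵀγ⁻¹ Ĵ_g))` sends `T_0` into `GSp_{2g}(ℤ_p)`,
and the image matrix has similitude factor `1`. -/
theorem T0_map_mem_GSp (p g : ℕ) [Fact p.Prime]
    (γ υ : Matrix (Fin g) (Fin g) (PadicInt p)) (h : MemT0 p g γ υ) :
    IsUnit (Matrix.fromBlocks γ 0 υ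
        (antiDiagOne g (PadicInt p) * (γ⁻¹)ᵀ * antiDiagOne g (PadicInt p))).det ∧
    (Matrix.fromBlocks γ 0 υ
        (antiDiagOne g (PadicInt p) * (γ⁻¹)ᵀ * antiDiagOne g (PadicInt p)))ᵀ *
      Jmat g (PadicInt p) *
      Matrix.fromBlocks γ 0 υ
        (antiDiagOne g (PadicInt p) * (γ⁻¹)ᵀ * antiDiagOne g (PadicInt p))
      = ((1 : (PadicInt p)ˣ) : PadicInt p) • Jmat g (PadicInt p) := by
  obtain ⟨⟨hγ, -⟩, -, hυ⟩ := h
  have hJ := antiDiagOne_mul_self g (PadicInt p)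
  refine ⟨isUnit_det_fromBlocks_conj_inv_transpose hJ hγ υ, ?_⟩
  rw [Units.val_one, one_smul, Jmat,
    fromBlocks_conj_inv_transpose_symplectic hJ (antiDiagOne_transpose g _) hγ hυ]
end

section
/- Let Ξ = {((α_a, α_b), (α_c, α_d)) ∈ GSp_{2g}(ℚ_p) : α_a ∈ Iw⁺_{GL_g}, α_b ∈ M_g(ℤ_p), α_c ∈ M_g(pℤ_p), α_d ∈ M_g(ℤ_p)}. Then for α ∈ Ξ and (γ, υ) ∈ T_0, the pair (α_a γ + α_b υ, α_c γ + α_d υ) again lies in T_0, and this defines a left action of the monoid Ξ on T_0. -/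
open Matrix

/-- A `ℚ_p`-matrix has entries in `ℤ_p`. -/
def IntMat {p g : ℕ} [Fact p.Prime] (a : Matrix (Fin g) (Fin g) ℚ_[p]) : Prop :=
  ∀ i j : Fin g, ‖a i j‖ ≤ 1

/-- A `ℚ_p`-matrix has entries in `pℤ_p`. -/
def PIntMat {p g : ℕ} [Fact p.Prime] (a : Matrix (Fin g) (Fin g) ℚ_[p]) : Prop :=
  ∀ i j : Fin g, ‖a i j‖ ≤ ‖(p : ℚ_[p])‖

/-- Membership in the strict Iwahori subgroup `Iw⁺_{GL_g} ⊂ GL_g(ℤ_p)`, viewed inside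
`M_g(ℚ_p)`: integral entries, off-diagonal entries divisible by `p`, unit determinant. -/
def MemIwPlusGLQ {p g : ℕ} [Fact p.Prime] (a : Matrix (Fin g) (Fin g) ℚ_[p]) : Prop :=
  IntMat a ∧ ‖a.det‖ = 1 ∧ ∀ i j : Fin g, i ≠ j → ‖a i j‖ ≤ ‖(p : ℚ_[p])‖

/-- Membership in `T_0`, viewed inside `M_g(ℚ_p) × M_g(ℚ_p)`. -/
def MemT0Q {p g : ℕ} [Fact p.Prime] (γ υ : Matrix (Fin g) (Fin g) ℚ_[p]) : Prop :=
  MemIwPlusGLQ γ ∧ PIntMat υ ∧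
    γᵀ * antiDiagOne g ℚ_[p] * υ = υᵀ * antiDiagOne g ℚ_[p] * γ

/-- Membership in the monoid `Ξ = ((Iw⁺_{GL_g}, M_g(ℤ_p)), (M_g(pℤ_p), M_g(ℤ_p))) ∩ GSp_{2g}(ℚ_p)`,
in terms of the four `g × g` blocks. -/
def MemXi {p g : ℕ} [Fact p.Prime] (a b c d : Matrix (Fin g) (Fin g) ℚ_[p]) : Prop :=
  MemIwPlusGLQ a ∧ IntMat b ∧ PIntMat c ∧ IntMat d ∧
    (∃ ς : ℚ_[p]ˣ, (Matrix.fromBlocks a b c d)ᵀ * Jmat g ℚ_[p] * Matrix.fromBlocks a b c d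
      = (ς : ℚ_[p]) • Jmat g ℚ_[p])

/-!
Write `X = (γ; υ)` as a `2g × g` matrix. The condition `γᵀ Ĵ υ = υᵀ Ĵ γ` says `Xᵀ J X = 0`, and
for `α` a symplectic similitude `(αX)ᵀ J (αX) = ς • Xᵀ J X`, so this isotropy is preserved by
`X ↦ αX`, whose blocks are `(α_a γ + α_b υ, α_c γ + α_d υ)`. The integrality conditions follow from
the ultrametric inequality: `α_a γ ∈ Iw⁺`, while `α_b υ` and `α_c γ + α_d υ` are divisible by `p`;
a perturbation divisible by `p` moves the determinant of an integral matrix by a multiple of `p`,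
so the determinant stays a unit. Compatibility with the monoid law is `(αα')X = α(α'X)`.
-/

section Ultrametric

variable {R : Type*}

lemma Matrix.norm_mul_apply_le [NormedRing R] [IsUltrametricDist R]
    {l m n : Type*} [Fintype m] {A : Matrix l m R} {B : Matrix m n R} {s t : ℝ}
    (hs : 0 ≤ s) (ht : 0 ≤ t) (hA : ∀ i j, ‖A i j‖ ≤ s) (hB : ∀ i j, ‖B i j‖ ≤ t) (i : l) (j : n) :
    ‖(A * B) i j‖ ≤ s * t :=
  IsUltrametricDist.norm_sum_le_of_forall_le_of_nonneg (mul_nonneg hs ht) fun k _ ↦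
    (norm_mul_le _ _).trans (mul_le_mul (hA i k) (hB k j) (norm_nonneg _) hs)

lemma Matrix.norm_mul_apply_le_of_ne [NormedRing R] [IsUltrametricDist R]
    {n : Type*} [Fintype n] {A B : Matrix n n R} {r : ℝ} (hr : 0 ≤ r)
    (hA : ∀ i j, ‖A i j‖ ≤ 1) (hAr : ∀ i j, i ≠ j → ‖A i j‖ ≤ r)
    (hB : ∀ i j, ‖B i j‖ ≤ 1) (hBr : ∀ i j, i ≠ j → ‖B i j‖ ≤ r) {i j : n} (hij : i ≠ j) :
    ‖(A * B) i j‖ ≤ r := by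
  refine IsUltrametricDist.norm_sum_le_of_forall_le_of_nonneg hr fun k _ ↦
    (norm_mul_le _ _).trans ?_
  rcases eq_or_ne k i with rfl | hki
  · simpa using mul_le_mul (hA k k) (hBr k j hij) (norm_nonneg _) zero_le_one
  · simpa using mul_le_mul (hAr i k hki.symm) (hB k j) (norm_nonneg _) hr

variable [NormedCommRing R] [NormOneClass R] [IsUltrametricDist R]

lemma norm_prod_sub_prod_le {ι : Type*} (s : Finset ι) {f h : ι → R} {ε : ℝ} (hε : 0 ≤ ε)
    (hf : ∀ i ∈ s, ‖f i‖ ≤ 1) (hh : ∀ i ∈ s, ‖h i‖ ≤ 1) (hfh : ∀ i ∈ s, ‖f i - h i‖ ≤ ε) :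
    ‖∏ i ∈ s, f i - ∏ i ∈ s, h i‖ ≤ ε := by
  classical
  induction s using Finset.induction_on with
  | empty => simpa using hε
  | insert a s ha ih =>
    simp only [Finset.mem_insert, forall_eq_or_imp] at hf hh hfh
    have hprod : ‖∏ i ∈ s, h i‖ ≤ 1 :=
      (Finset.norm_prod_le _ _).trans (Finset.prod_le_one (fun _ _ ↦ norm_nonneg _) hh.2)
    rw [Finset.prod_insert ha, Finset.prod_insert ha,
      show f a * ∏ i ∈ s, f i - h a * ∏ i ∈ s, h i
        = f a * (∏ i ∈ s, f i - ∏ i ∈ s, h i) + (f a - h a) * ∏ i ∈ s, h i by ring]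
    refine (IsUltrametricDist.norm_add_le_max _ _).trans (max_le ?_ ?_)
    · simpa using (norm_mul_le _ _).trans
        (mul_le_mul hf.1 (ih hf.2 hh.2 hfh.2) (norm_nonneg _) zero_le_one)
    · simpa using (norm_mul_le _ _).trans (mul_le_mul hfh.1 hprod (norm_nonneg _) hε)

lemma Matrix.norm_det_sub_det_le {n : Type*} [Fintype n] [DecidableEq n] {X Y : Matrix n n R}
    {ε : ℝ} (hε : 0 ≤ ε) (hX : ∀ i j, ‖X i j‖ ≤ 1) (hY : ∀ i j, ‖Y i j‖ ≤ 1)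
    (hXY : ∀ i j, ‖X i j - Y i j‖ ≤ ε) : ‖X.det - Y.det‖ ≤ ε := by
  rw [Matrix.det_apply, Matrix.det_apply, ← Finset.sum_sub_distrib]
  refine IsUltrametricDist.norm_sum_le_of_forall_le_of_nonneg hε fun σ _ ↦ ?_
  rw [← smul_sub]
  have hprod := norm_prod_sub_prod_le Finset.univ hε (fun i _ ↦ hX (σ i) i)
    (fun i _ ↦ hY (σ i) i) (fun i _ ↦ hXY (σ i) i)
  rcases Int.units_eq_one_or (Equiv.Perm.sign σ) with hσ | hσ <;>
    simpa only [hσ, one_smul, Units.neg_smul, norm_neg] using hprod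

end Ultrametric

section Symplectic

variable {R : Type*} [CommRing R]

lemma Matrix.transpose_mul_mul_eq_zero_of_transpose_mul_mul_eq_smul {m n : Type*} [Fintype m]
    {J M : Matrix m m R} {X : Matrix m n R} {s : R} (hM : Mᵀ * J * M = s • J)
    (hX : Xᵀ * J * X = 0) : (M * X)ᵀ * J * (M * X) = 0 :=
  calc (M * X)ᵀ * J * (M * X) = Xᵀ * (Mᵀ * J * M) * X := by
        simp only [transpose_mul, Matrix.mul_assoc]
    _ = s • (Xᵀ * J * X) := by rw [hM, Matrix.mul_smul, Matrix.smul_mul]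
    _ = 0 := by rw [hX, smul_zero]

lemma fromRows_transpose_mul_Jmat_mul_fromRows {g : ℕ} {n : Type*} (γ υ : Matrix (Fin g) n R) :
    (fromRows γ υ)ᵀ * Jmat g R * fromRows γ υ
      = υᵀ * antiDiagOne g R * γ - γᵀ * antiDiagOne g R * υ := by
  rw [transpose_fromRows, Jmat, fromCols_mul_fromBlocks, fromCols_mul_fromRows]
  simp only [Matrix.mul_zero, zero_add, add_zero, Matrix.mul_neg, Matrix.neg_mul]
  abel

end Symplectic

section Padic

variable {p g : ℕ} [Fact p.Prime] {A B : Matrix (Fin g) (Fin g) ℚ_[p]}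

lemma IntMat.add (hA : IntMat A) (hB : IntMat B) : IntMat (A + B) := fun i j ↦
  (IsUltrametricDist.norm_add_le_max _ _).trans (max_le (hA i j) (hB i j))

lemma IntMat.mul (hA : IntMat A) (hB : IntMat B) : IntMat (A * B) := fun i j ↦ by
  simpa using Matrix.norm_mul_apply_le zero_le_one zero_le_one hA hB i j

lemma PIntMat.intMat (hA : PIntMat A) : IntMat A := fun i j ↦
  (hA i j).trans (Padic.norm_p_lt_one (p := p)).le

lemma PIntMat.add (hA : PIntMat A) (hB : PIntMat B) : PIntMat (A + B) := fun i j ↦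
  (IsUltrametricDist.norm_add_le_max _ _).trans (max_le (hA i j) (hB i j))

lemma PIntMat.mul_left (hB : PIntMat B) (hA : IntMat A) : PIntMat (A * B) := fun i j ↦ by
  simpa using Matrix.norm_mul_apply_le zero_le_one (norm_nonneg _) hA hB i j

lemma PIntMat.mul_right (hA : PIntMat A) (hB : IntMat B) : PIntMat (A * B) := fun i j ↦ by
  simpa using Matrix.norm_mul_apply_le (norm_nonneg _) zero_le_one hA hB i j

lemma MemIwPlusGLQ.mul (hA : MemIwPlusGLQ A) (hB : MemIwPlusGLQ B) : MemIwPlusGLQ (A * B) :=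
  ⟨hA.1.mul hB.1, by rw [Matrix.det_mul, norm_mul, hA.2.1, hB.2.1, one_mul],
    fun _ _ ↦ Matrix.norm_mul_apply_le_of_ne (norm_nonneg _) hA.1 hA.2.2 hB.1 hB.2.2⟩

lemma MemIwPlusGLQ.add_pIntMat (hA : MemIwPlusGLQ A) (hB : PIntMat B) :
    MemIwPlusGLQ (A + B) := by
  obtain ⟨hAint, hAdet, hAoff⟩ := hA
  have hdet : ‖(A + B).det - A.det‖ < ‖A.det‖ := by
    refine lt_of_le_of_lt ?_ (hAdet ▸ Padic.norm_p_lt_one (p := p))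
    refine Matrix.norm_det_sub_det_le (norm_nonneg _) (hAint.add hB.intMat) hAint fun i j ↦ ?_
    simpa using hB i j
  refine ⟨hAint.add hB.intMat, (Padic.norm_eq_of_norm_sub_lt_right hdet).trans hAdet,
    fun i j hij ↦ ?_⟩
  exact (IsUltrametricDist.norm_add_le_max _ _).trans (max_le (hAoff i j hij) (hB i j))

end Padic

/-- For `α ∈ Ξ` and `(γ, υ) ∈ T_0`, the pair `(α_a γ + α_b υ, α_c γ + α_d υ)` again lies
in `T_0`, and this defines a left action of the monoid `Ξ` on `T_0` (compatibility with
the block multiplication of `Ξ`). -/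
theorem Xi_left_action (p g : ℕ) [Fact p.Prime]
    (a b c d γ υ : Matrix (Fin g) (Fin g) ℚ_[p])
    (hα : MemXi a b c d) (hx : MemT0Q γ υ) :
    MemT0Q (a * γ + b * υ) (c * γ + d * υ) ∧
    ∀ a' b' c' d' : Matrix (Fin g) (Fin g) ℚ_[p], MemXi a' b' c' d' →
      ((a * a' + b * c') * γ + (a * b' + b * d') * υ
          = a * (a' * γ + b' * υ) + b * (c' * γ + d' * υ) ∧
       (c * a' + d * c') * γ + (c * b' + d * d') * υ
          = c * (a' * γ + b' * υ) + d * (c' * γ + d' * υ)) := by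
  obtain ⟨ha, hb, hc, hd, ς, hsimil⟩ := hα
  obtain ⟨hγ, hυ, hsymm⟩ := hx
  have hX : (fromRows γ υ)ᵀ * Jmat g ℚ_[p] * fromRows γ υ = 0 := by
    rw [fromRows_transpose_mul_Jmat_mul_fromRows, hsymm, sub_self]
  have hαX := transpose_mul_mul_eq_zero_of_transpose_mul_mul_eq_smul hsimil hX
  rw [fromBlocks_mul_fromRows, fromRows_transpose_mul_Jmat_mul_fromRows, sub_eq_zero] at hαX
  refine ⟨⟨(ha.mul hγ).add_pIntMat (hυ.mul_left hb), (hc.mul_right hγ.1).add (hυ.mul_left hd),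
    hαX.symm⟩, fun a' b' c' d' _ ↦ ?_⟩
  have hassoc := Matrix.mul_assoc (fromBlocks a b c d) (fromBlocks a' b' c' d') (fromRows γ υ)
  rwa [fromBlocks_multiply, fromBlocks_mul_fromRows, fromBlocks_mul_fromRows,
    fromBlocks_mul_fromRows, fromRows_ext_iff] at hassoc
end

section
/- Let A be a noetherian domain and B a finite flat A-algebra. Suppose M and N are B-modules, finite flat over A, with B-module isomorphisms M ≅ B^∨ and N ≅ B^∨ where B^∨ = Hom_A(B, A), and suppose β : M × N → A is an A-bilinear B-equivariant pairing (β(bm, n) = β(m, bn)). Let β_B denote the base change of β to a B-bilinear pairing (M ⊗_A B) × (N ⊗_A B) → B, and let I = ker(B ⊗_A B → B). Then the ideal of B generated by β_B((M ⊗_A B)[I] × (N ⊗_A B)[I]) is a principal ideal. -/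
open TensorProduct

section

variable (A B M N : Type*) [CommRing A] [CommRing B] [Algebra A B]
  [AddCommGroup M] [Module A M] [Module B M] [IsScalarTower A B M]
  [AddCommGroup N] [Module A N] [Module B N] [IsScalarTower A B N]

/-- Scalar multiplication by `b ∈ B` on a `B`-module, as an `A`-linear map. -/
def smulMap (b : B) : M →ₗ[A] M := (LinearMap.lsmul B M b).restrictScalars A

/-- The `B`-module structure on `M^∨ = Hom_A(M, A)`: `(b • ψ)(m) = ψ(b • m)`. -/
def dualSmulHom (b : B) : Module.Dual A M →ₗ[A] Module.Dual A M :=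
  ((LinearMap.lsmul B M b).restrictScalars A).dualMap

/-- The `I`-torsion subset of `M ⊗_A B`, for `I = ker(B ⊗_A B → B)`: elements killed by
the generators `b' ⊗ 1 − 1 ⊗ b'` of `I` (acting by `b'•` on `M` and by multiplication
on `B`). -/
def torsSet : Set (M ⊗[A] B) :=
  {x | ∀ b' : B, TensorProduct.map (smulMap A B M b') LinearMap.id x
    = TensorProduct.map LinearMap.id (LinearMap.mulLeft A b') x}

/-- The base change `β_B` of an `A`-bilinear pairing `β : M × N → A` to a `B`-bilinear
pairing `(M ⊗_A B) × (N ⊗_A B) → B`, packaged on the tensor product: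
`β_B((m ⊗ b) ⊗ (n ⊗ b')) = β(m, n) • (b b')`. -/
noncomputable def betaB (β : M →ₗ[A] N →ₗ[A] A) :
    (M ⊗[A] B) ⊗[A] (N ⊗[A] B) →ₗ[A] B :=
  (TensorProduct.lid A B).toLinearMap ∘ₗ
    TensorProduct.map (TensorProduct.lift β) (LinearMap.mul' A B) ∘ₗ
    (TensorProduct.tensorTensorTensorComm A M B N B).toLinearMap

end

/-!
Since `B` is finite projective over `A`, `Hom_A(B, A) ⊗_A B ≅ End_A(B)`. Transporting along
`M ≅ B^∨`, the `I`-torsion elements of `M ⊗_A B` are exactly those whose endomorphism of `B`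
commutes with all multiplications, i.e. is a multiplication `c • -`; so `(M ⊗_A B)[I]` is the
cyclic `B`-module generated by the preimage `x₀` of the identity, and likewise for `N`. As
`β_B` is `B`-bilinear, the ideal is generated by `β_B(x₀, y₀)`.
-/

open LinearMap

section TorsionGenerator

variable {A B M : Type*} [CommRing A] [CommRing B] [Algebra A B] [AddCommGroup M] [Module A M]

theorem LinearMap.eq_mulLeft_of_comp_mulLeft {f : B →ₗ[A] B}
    (hf : ∀ c : B, f ∘ₗ mulLeft A c = mulLeft A c ∘ₗ f) : f = mulLeft A (f 1) := by
  ext z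
  simpa [mul_comm] using LinearMap.congr_fun (hf z) 1

variable [Module.Finite A B] [Module.Projective A B]

noncomputable def tensorEquivEnd (e : M ≃ₗ[A] Module.Dual A B) :
    M ⊗[A] B ≃ₗ[A] Module.End A B :=
  (e.rTensor B).trans (dualTensorHomEquiv A B B)

theorem tensorEquivEnd_lTensor_mulLeft (e : M ≃ₗ[A] Module.Dual A B) (c : B) (x : M ⊗[A] B) :
    tensorEquivEnd e ((mulLeft A c).lTensor M x) = mulLeft A c ∘ₗ tensorEquivEnd e x := by
  induction x using TensorProduct.induction_on with
  | zero => simp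
  | tmul m b => ext z; simp [tensorEquivEnd]
  | add x y hx hy => simp only [map_add, hx, hy, comp_add]

variable [Module B M] [IsScalarTower A B M]

theorem tensorEquivEnd_rTensor_smulMap (e : M ≃ₗ[A] Module.Dual A B)
    (he : ∀ (b : B) (m : M), e (b • m) = dualSmulHom A B B b (e m)) (c : B) (x : M ⊗[A] B) :
    tensorEquivEnd e ((smulMap A B M c).rTensor B x) = tensorEquivEnd e x ∘ₗ mulLeft A c := by
  induction x using TensorProduct.induction_on with
  | zero => simp
  | tmul m b => ext z; simp [tensorEquivEnd, smulMap, he, dualSmulHom]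
  | add x y hx hy => simp only [map_add, hx, hy, add_comp]

theorem mem_torsSet_iff_commute_mulLeft (e : M ≃ₗ[A] Module.Dual A B)
    (he : ∀ (b : B) (m : M), e (b • m) = dualSmulHom A B B b (e m)) (x : M ⊗[A] B) :
    x ∈ torsSet A B M ↔
      ∀ c : B, tensorEquivEnd e x ∘ₗ mulLeft A c = mulLeft A c ∘ₗ tensorEquivEnd e x := by
  refine forall_congr' fun c => ?_
  rw [← tensorEquivEnd_rTensor_smulMap e he, ← tensorEquivEnd_lTensor_mulLeft]
  exact (tensorEquivEnd e).injective.eq_iff.symm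

theorem exists_generator_torsSet
    (he : ∃ e : M ≃ₗ[A] Module.Dual A B,
      ∀ (b : B) (m : M), e (b • m) = dualSmulHom A B B b (e m)) :
    ∃ x₀ ∈ torsSet A B M, ∀ x ∈ torsSet A B M,
      ∃ c : B, x = (mulLeft A c).lTensor M x₀ := by
  obtain ⟨e, he⟩ := he
  refine ⟨(tensorEquivEnd e).symm LinearMap.id, ?_, fun x hx => ⟨tensorEquivEnd e x 1, ?_⟩⟩
  · simp [mem_torsSet_iff_commute_mulLeft e he]
  · apply (tensorEquivEnd e).injective
    rw [tensorEquivEnd_lTensor_mulLeft, LinearEquiv.apply_symm_apply, comp_id]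
    exact eq_mulLeft_of_comp_mulLeft ((mem_torsSet_iff_commute_mulLeft e he x).mp hx)

end TorsionGenerator

theorem betaB_lTensor_mulLeft {A B M N : Type*} [CommRing A] [CommRing B] [Algebra A B]
    [AddCommGroup M] [Module A M] [AddCommGroup N] [Module A N]
    (β : M →ₗ[A] N →ₗ[A] A) (c c' : B) (x : M ⊗[A] B) (y : N ⊗[A] B) :
    betaB A B M N β ((mulLeft A c).lTensor M x ⊗ₜ[A] (mulLeft A c').lTensor N y)
      = c * c' * betaB A B M N β (x ⊗ₜ[A] y) := by
  suffices betaB A B M N β ∘ₗ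
      TensorProduct.map ((mulLeft A c).lTensor M) ((mulLeft A c').lTensor N)
      = mulLeft A (c * c') ∘ₗ betaB A B M N β from LinearMap.congr_fun this (x ⊗ₜ y)
  refine TensorProduct.ext_fourfold' fun m b n b' => ?_
  simp only [betaB, coe_comp, LinearEquiv.coe_coe, Function.comp_apply, TensorProduct.map_tmul,
    lTensor_tmul, tensorTensorTensorComm_tmul, lift.tmul, mul'_apply, mulLeft_apply,
    TensorProduct.lid_tmul, mul_smul_comm]
  congr 1
  ring

theorem L_ideal_principal_general (A B M N : Type*) [CommRing A] [IsNoetherianRing A]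
    [CommRing B] [Algebra A B] [Module.Finite A B] [Module.Flat A B]
    [AddCommGroup M] [Module A M] [Module B M] [IsScalarTower A B M]
    [AddCommGroup N] [Module A N] [Module B N] [IsScalarTower A B N]
    (eM : ∃ e : M ≃ₗ[A] Module.Dual A B,
      ∀ (b : B) (m : M), e (b • m) = dualSmulHom A B B b (e m))
    (eN : ∃ e : N ≃ₗ[A] Module.Dual A B,
      ∀ (b : B) (n : N), e (b • n) = dualSmulHom A B B b (e n))
    (β : M →ₗ[A] N →ₗ[A] A) :
    (Ideal.span {r : B | ∃ x ∈ torsSet A B M, ∃ y ∈ torsSet A B N,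
        betaB A B M N β (x ⊗ₜ[A] y) = r}).IsPrincipal := by
  have : Module.FinitePresentation A B := Module.finitePresentation_of_finite A B
  have : Module.Projective A B := Module.Flat.projective_of_finitePresentation
  obtain ⟨x₀, hx₀, hx⟩ := exists_generator_torsSet eM
  obtain ⟨y₀, hy₀, hy⟩ := exists_generator_torsSet eN
  refine ⟨⟨betaB A B M N β (x₀ ⊗ₜ[A] y₀), le_antisymm ?_ ?_⟩⟩
  · rw [Ideal.span_le]
    rintro r ⟨x, hx', y, hy', rfl⟩
    obtain ⟨c, rfl⟩ := hx x hx'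
    obtain ⟨c', rfl⟩ := hy y hy'
    rw [betaB_lTensor_mulLeft]
    exact Ideal.mem_span_singleton.mpr (dvd_mul_left _ _)
  · exact Ideal.span_mono (Set.singleton_subset_iff.mpr ⟨x₀, hx₀, y₀, hy₀, rfl⟩)

/-- Bellaïche's principality lemma: for `A` a noetherian domain, `B` a finite flat
`A`-algebra, `M ≅ B^∨ ≅ N` as `B`-modules (finite flat over `A`) and `β : M × N → A`
an `A`-bilinear `B`-equivariant pairing, the ideal of `B` generated by the image of
`β_B` on the `I`-torsion parts `(M ⊗_A B)[I] × (N ⊗_A B)[I]` is principal. -/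
theorem L_ideal_principal (A B M N : Type*) [CommRing A] [IsDomain A] [IsNoetherianRing A]
    [CommRing B] [Algebra A B] [Module.Finite A B] [Module.Flat A B]
    [AddCommGroup M] [Module A M] [Module B M] [IsScalarTower A B M]
    [Module.Finite A M] [Module.Flat A M]
    [AddCommGroup N] [Module A N] [Module B N] [IsScalarTower A B N]
    [Module.Finite A N] [Module.Flat A N]
    (eM : ∃ e : M ≃ₗ[A] Module.Dual A B,
      ∀ (b : B) (m : M), e (b • m) = dualSmulHom A B B b (e m))
    (eN : ∃ e : N ≃ₗ[A] Module.Dual A B,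
      ∀ (b : B) (n : N), e (b • n) = dualSmulHom A B B b (e n))
    (β : M →ₗ[A] N →ₗ[A] A)
    (hβ : ∀ (b : B) (m : M) (n : N), β (b • m) n = β m (b • n)) :
    (Ideal.span {r : B | ∃ x ∈ torsSet A B M, ∃ y ∈ torsSet A B N,
        betaB A B M N β (x ⊗ₜ[A] y) = r}).IsPrincipal :=
  L_ideal_principal_general A B M N eM eN β
end
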